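/- Assume ω_{134} ≠ ω_{234}, and let B be a symmetric ℂ-bilinear form on U with B(v_{12}, v_{34}) = 0 and B(v_{13}, v_{24}) = 0. Set f = Σ_{1≤i<j≤4} α_{ij} v_{ij}, with α_{ij} as defined from the square roots s. Then B(f, f) = 0; i.e., the linear combination of tetrahedron-1234 edge vectors with coefficients α is isotropic (the tetrahedron component of Theorem on superisotropic operators). -/

import Mathlib

/-!
Eliminating `v14, v24, v34` with the vertex relations writes `f = s124 p • v12 + s134 q • v13 +
s234 r • v23`, and the fifth relation becomes `ω124 v12 + ω134 v13 + ω234 v23 = 0`. Pairing it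
with `v12, v13, v23` and using the two orthogonality conditions shows that `B(f, f)` is
`B(v12, v13)` times a quadratic form in `(p, q, r)`. The triple `(p, q, r)` is the image of
`(s125 s345, s135 s245, s145 s235)` under a linear map that rescales this form by
`ω123 - ω124 + ω134 - ω234`, which vanishes because `ω` is a coboundary.
-/

section

variable {R : Type*} [CommRing R]

/-- The square norm, for the signature `(-, +, -)`, of the cross product `(a, b, c) × (X, Y, Z)`. -/
def lorentzCrossSq (a b c X Y Z : R) : R :=
  (c * X - a * Z) ^ 2 - (b * X - a * Y) ^ 2 - (c * Y - b * Z) ^ 2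

theorem lorentzCrossSq_transform (a b c d X Y Z : R) :
    lorentzCrossSq a b c (d * X + c * Y - b * Z) (c * X + d * Y - a * Z) (b * X - a * Y + d * Z) =
      (d ^ 2 - a ^ 2 + b ^ 2 - c ^ 2) * lorentzCrossSq a b c X Y Z := by
  unfold lorentzCrossSq
  ring

variable {M : Type*} [AddCommGroup M] [Module R M]

theorem apply_self_eq_mul_lorentzCrossSq (B : M →ₗ[R] M →ₗ[R] R) (hB : ∀ u v, B u v = B v u)
    {x y z : M} {a b c : R} (hrel : a ^ 2 • x + b ^ 2 • y + c ^ 2 • z = 0)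
    (hxy : B x (y + z) = 0) (hyz : B y (x - z) = 0) (X Y Z : R) :
    B ((a * X) • x + (b * Y) • y + (c * Z) • z) ((a * X) • x + (b * Y) • y + (c * Z) • z) =
      B x y * lorentzCrossSq a b c X Y Z := by
  have pair (w : M) : a ^ 2 * B w x + b ^ 2 * B w y + c ^ 2 * B w z = 0 := by
    simpa only [map_add, map_smul, map_zero, smul_eq_mul] using congrArg (B w) hrel
  have ex := pair x
  have ey := pair y
  have ez := pair z
  simp only [map_add, map_sub, map_smul, LinearMap.add_apply, LinearMap.smul_apply,
    smul_eq_mul] at hxy hyz ⊢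
  rw [hB y x] at ey hyz ⊢
  rw [hB z x, hB z y] at ez ⊢
  unfold lorentzCrossSq
  linear_combination X ^ 2 * ex + Y ^ 2 * ey + Z ^ 2 * ez - (c * X - a * Z) ^ 2 * hxy +
    (c * Y - b * Z) ^ 2 * hyz

end

theorem tetrahedron_component_superisotropic
    (U : Type*) [AddCommGroup U] [Module ℂ U]
    (ν12 ν13 ν14 ν23 ν24 ν34 : ℂ)
    (ω123 ω124 ω134 ω234 : ℂ)
    (hω123 : ω123 = ν23 - ν13 + ν12) (hω124 : ω124 = ν24 - ν14 + ν12)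
    (hω134 : ω134 = ν34 - ν14 + ν13)
    (hω234 : ω234 = ν34 - ν24 + ν23)
    (s123 s124 s125 s134 s135 s145 s234 s235 s245 s345 : ℂ)
    (hs123 : s123 ^ 2 = ω123) (hs124 : s124 ^ 2 = ω124)
    (hs134 : s134 ^ 2 = ω134)
    (hs234 : s234 ^ 2 = ω234)
    (v12 v13 v14 v23 v24 v34 : U)
    (h1 : v12 + v13 + v14 = 0) (h2 : -v12 + v23 + v24 = 0)
    (h3 : -v13 - v23 + v34 = 0)
    (h5 : ν12 • v12 + ν13 • v13 + ν14 • v14 + ν23 • v23 + ν24 • v24 + ν34 • v34 = 0)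
    (B : U →ₗ[ℂ] U →ₗ[ℂ] ℂ) (hsym : ∀ u v, B u v = B v u)
    (horth1 : B v12 v34 = 0) (horth2 : B v13 v24 = 0)
    (f : U)
    (hf : f = (s123 * s124 * s125 * s345) • v12 + (s123 * s134 * s135 * s245) • v13 +
        (s124 * s134 * s145 * s235) • v14 + (s123 * s234 * s235 * s145) • v23 +
        (s124 * s234 * s245 * s135) • v24 + (s125 * s134 * s234 * s345) • v34) :
    B f f = 0 := by
  have hv34 : v34 = v13 + v23 := by linear_combination (norm := module) h3
  have hv24 : v24 = v12 - v23 := by linear_combination (norm := module) h2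
  have hrel : s124 ^ 2 • v12 + s134 ^ 2 • v13 + s234 ^ 2 • v23 = 0 := by
    rw [hs124, hs134, hs234, hω124, hω134, hω234]
    linear_combination (norm := module) h5 - ν14 • h1 - ν24 • h2 - ν34 • h3
  set X := s125 * s345
  set Y := s135 * s245
  set Z := s145 * s235
  have hf' : f = (s124 * (s123 * X + s234 * Y - s134 * Z)) • v12 +
      (s134 * (s234 * X + s123 * Y - s124 * Z)) • v13 +
      (s234 * (s134 * X - s124 * Y + s123 * Z)) • v23 := by
    linear_combination (norm := module) hf + (s124 * s134 * Z) • h1 + (s124 * s234 * Y) • h2 +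
      (s134 * s234 * X) • h3
  have hcocycle : s123 ^ 2 - s124 ^ 2 + s134 ^ 2 - s234 ^ 2 = 0 := by
    rw [hs123, hs124, hs134, hs234, hω123, hω124, hω134, hω234]
    ring
  rw [hv34] at horth1
  rw [hv24] at horth2
  rw [hf', apply_self_eq_mul_lorentzCrossSq B hsym hrel horth1 horth2, lorentzCrossSq_transform,
    hcocycle, zero_mul, mul_zero]
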